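/- In a path with n nodes all having threshold 1 and time bound λ, any single node given incentive 1 can (directly or indirectly) cause at most 2λ+1 nodes to be influenced within λ rounds; consequently any incentive function p with Influenced[p,λ] = V satisfies Σ_v p(v) ≥ ⌈n/(2λ+1)⌉. -/

import Mathlib

/-!
With all thresholds equal to 1, a node that receives no incentive can only become influenced
through an influenced neighbour one round earlier. Hence, by induction on the round, every node
influenced by round `ℓ` lies within distance `ℓ` of some node with a positive incentive, so the
influenced set is covered by intervals of length `2ℓ + 1` around the incentivised nodes. A
single seed therefore influences at most `2λ + 1` nodes, and covering all `n` nodes needs at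
least `⌈n / (2λ + 1)⌉` incentivised nodes, each costing at least 1.
-/

open Finset

/-- Path adjacency on ℕ: `u` and `v` are consecutive. -/
def pAdj (u v : ℕ) : Prop := u + 1 = v ∨ v + 1 = u

instance : DecidableRel pAdj := fun u v => by unfold pAdj; infer_instance

/-- Influence process on the node set `S` of a path, thresholds `t`, incentives `p`:
at round 0 exactly the nodes with `p v ≥ t v` are influenced; afterwards a node is
influenced once the number of already influenced neighbours reaches `t v - p v`. -/
def infl (S : Finset ℕ) (t p : ℕ → ℕ) : ℕ → Finset ℕ
  | 0 => S.filter fun v => t v ≤ p v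
  | ℓ + 1 => infl S t p ℓ ∪ S.filter fun v =>
      t v - p v ≤ ((infl S t p ℓ).filter fun u => pAdj u v).card

section UnitThresholds

variable (S : Finset ℕ) (p : ℕ → ℕ)

def seeds : Finset ℕ := S.filter fun v => 1 ≤ p v

theorem exists_seed_of_mem_infl {ℓ w : ℕ} (hw : w ∈ infl S (fun _ => 1) p ℓ) :
    ∃ v ∈ seeds S p, w ∈ Icc (v - ℓ) (v + ℓ) := by
  induction ℓ generalizing w with
  | zero =>
    simp only [infl, mem_filter] at hw
    exact ⟨w, mem_filter.mpr hw, by simp⟩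
  | succ ℓ ih =>
    simp only [infl, mem_union, mem_filter] at hw
    rcases hw with hw | ⟨hwS, hcount⟩
    · obtain ⟨v, hv, hwv⟩ := ih hw
      exact ⟨v, hv, by simp only [mem_Icc] at hwv ⊢; omega⟩
    by_cases hpw : 1 ≤ p w
    · exact ⟨w, mem_filter.mpr ⟨hwS, hpw⟩, by simp only [mem_Icc]; omega⟩
    -- `w` is not a seed, so the threshold forces an influenced neighbour at round `ℓ`.
    obtain ⟨u, hu⟩ : ((infl S (fun _ => 1) p ℓ).filter fun u => pAdj u w).Nonempty :=
      card_pos.mp (by omega)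
    obtain ⟨huℓ, huw⟩ := mem_filter.mp hu
    obtain ⟨v, hv, huv⟩ := ih huℓ
    refine ⟨v, hv, ?_⟩
    simp only [pAdj, mem_Icc] at huw huv ⊢
    omega

theorem infl_subset_biUnion_Icc (ℓ : ℕ) :
    infl S (fun _ => 1) p ℓ ⊆ (seeds S p).biUnion fun v => Icc (v - ℓ) (v + ℓ) := by
  intro w hw
  obtain ⟨v, hv, hwv⟩ := exists_seed_of_mem_infl S p hw
  exact mem_biUnion.mpr ⟨v, hv, hwv⟩

theorem card_infl_le (ℓ : ℕ) :
    #(infl S (fun _ => 1) p ℓ) ≤ #(seeds S p) * (2 * ℓ + 1) := by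
  refine (card_le_card (infl_subset_biUnion_Icc S p ℓ)).trans ?_
  refine card_biUnion_le_card_mul _ _ _ fun v _ => ?_
  rw [Nat.card_Icc]
  omega

theorem card_seeds_le_sum : #(seeds S p) ≤ ∑ v ∈ S, p v := by
  rw [seeds, card_filter]
  exact sum_le_sum fun v _ => by split_ifs <;> omega

end UnitThresholds

/-- on a path of `n` nodes all with threshold 1, a single node given
incentive 1 influences at most `2*lam+1` nodes within `lam` rounds; consequently any
incentive function covering the whole path costs at least `⌈n/(2lam+1)⌉`. -/
theorem path_single_seed_bound_and_lower_bound (n lam : ℕ) :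
    (∀ v < n,
      (infl (range n) (fun _ => 1) (fun u => if u = v then 1 else 0) lam).card ≤ 2 * lam + 1)
    ∧ ∀ p : ℕ → ℕ, (∀ v < n, p v ≤ 1) →
        infl (range n) (fun _ => 1) p lam = range n →
        (n + 2 * lam) / (2 * lam + 1) ≤ ∑ v ∈ range n, p v := by
  constructor
  · intro v _
    have h_single : #(seeds (range n) fun u => if u = v then 1 else 0) ≤ 1 :=
      card_le_one.mpr fun a ha b hb => by
        simp only [seeds, mem_filter] at ha hb
        split_ifs at ha hb <;> omega
    calc _ ≤ #(seeds (range n) fun u => if u = v then 1 else 0) * (2 * lam + 1) :=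
          card_infl_le _ _ lam
      _ ≤ 2 * lam + 1 := by nlinarith
  · intro p _ hcover
    have h_cover : n ≤ (∑ v ∈ range n, p v) * (2 * lam + 1) :=
      calc n = #(infl (range n) (fun _ => 1) p lam) := by rw [hcover, card_range]
        _ ≤ #(seeds (range n) p) * (2 * lam + 1) := card_infl_le _ _ lam
        _ ≤ (∑ v ∈ range n, p v) * (2 * lam + 1) :=
          Nat.mul_le_mul_right _ (card_seeds_le_sum _ _)
    rw [Nat.div_le_iff_le_mul_add_pred (by omega), mul_comm (2 * lam + 1)]
    omega
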